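/- (Lower bound for the caloric B^{-1}_{∞,∞} norm of anisotropically scaled data, case α < β.) Let 0 ≤ α < β < 1 and let f, g, h be Schwartz functions on ℝ. For ε > 0 define ψ^ε(x) = f(ε^α x₁) g(ε^β x₂) h(ε x₃) on ℝ³. Then there exists ε₀ > 0 such that for all 0 < ε < ε₀, sup_{t>0} t^{1/2} ‖H₃(t) ψ^ε‖_{L^∞(ℝ³)} ≥ (1/4) ε^{−α} · ( sup_{t>0} t^{1/2} ‖H₁(t) f‖_{L^∞(ℝ)} ) · ‖g‖_{L^∞(ℝ)} · ‖h‖_{L^∞(ℝ)}. -/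

import Mathlib

open MeasureTheory

/-- The heat semigroup on `ℝ³`. -/
noncomputable def heat3 (t : ℝ) (φ : EuclideanSpace ℝ (Fin 3) → ℝ)
    (x : EuclideanSpace ℝ (Fin 3)) : ℝ :=
  ∫ y : EuclideanSpace ℝ (Fin 3),
    (4 * Real.pi * t) ^ (-(3 : ℝ) / 2) * Real.exp (-‖x - y‖ ^ 2 / (4 * t)) * φ y

/-- The heat semigroup on `ℝ`. -/
noncomputable def heat1 (t : ℝ) (φ : ℝ → ℝ) (x : ℝ) : ℝ :=
  ∫ y : ℝ, (4 * Real.pi * t) ^ (-(1 : ℝ) / 2) * Real.exp (-(x - y) ^ 2 / (4 * t)) * φ y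

/-!
Heat flow factorizes over the coordinates and commutes with dilations, so at time
`t = ε^{-2α} s` the solution with data `ψ^ε` is
`H₁(s)f(ε^α x₁) · H₁(ε^{2(β-α)} s)g(ε^β x₂) · H₁(ε^{2(1-α)} s)h(ε x₃)`, and the prefactor
`t^{1/2} = ε^{-α} s^{1/2}` carries all of the scaling. Pick `s` and a point `y₁` nearly attaining
the caloric norm of `f`, and points `y₂`, `y₃` nearly attaining `‖g‖_∞`, `‖h‖_∞`. Because
`α < β < 1`, the times of the last two factors tend to `0`, so those factors converge to `g(y₂)`
and `h(y₃)`. Evaluating at the point that the dilations send to `(y₁, y₂, y₃)` gives the bound;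
the factor `1/4` leaves room for the approximations.
-/

open Real Filter Topology BoundedContinuousFunction
open scoped ENNReal

theorem Continuous.eLpNorm_top_eq_iSup {X E : Type*} [TopologicalSpace X] [MeasurableSpace X]
    {μ : Measure X} [μ.IsOpenPosMeasure] [TopologicalSpace E] [ContinuousENorm E] {f : X → E}
    (hf : Continuous f) : eLpNorm f ∞ μ = ⨆ x, ‖f x‖ₑ := by
  rw [eLpNorm_exponent_top, eLpNormEssSup_eq_essSup_enorm, ← iSup_eq_essSup]
  exact fun x a hx => (isOpen_lt continuous_const hf.enorm).measure_ne_zero μ ⟨x, hx⟩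

theorem Continuous.enorm_le_eLpNorm_top {X E : Type*} [TopologicalSpace X] [MeasurableSpace X]
    {μ : Measure X} [μ.IsOpenPosMeasure] [TopologicalSpace E] [ContinuousENorm E] {f : X → E}
    (hf : Continuous f) (x : X) : ‖f x‖ₑ ≤ eLpNorm f ∞ μ :=
  (hf.eLpNorm_top_eq_iSup (μ := μ)).symm ▸ le_iSup (fun x => ‖f x‖ₑ) x

theorem ENNReal.exists_lt_lt_of_lt_mul {a b c : ℝ≥0∞} (h : c < a * b) :
    ∃ a' < a, ∃ b' < b, c < a' * b' := by
  by_contra! H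
  exact h.not_ge (ENNReal.mul_le_of_forall_lt H)

theorem integrable_exp_neg_sq : Integrable fun v : ℝ => exp (-v ^ 2) := by
  simpa using integrable_exp_neg_mul_sq one_pos

theorem integral_exp_neg_sq : ∫ v : ℝ, exp (-v ^ 2) = √π := by
  simpa using integral_gaussian 1

theorem continuous_integral_exp_neg_sq_mul_comp (φ : ℝ →ᵇ ℝ) :
    Continuous fun p : ℝ × ℝ => ∫ v, exp (-v ^ 2) * φ (p.1 - p.2 * v) := by
  refine continuous_of_dominated (bound := fun v => exp (-v ^ 2) * ‖φ‖)
    (fun p => by fun_prop) (fun p => ae_of_all _ fun v => ?_)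
    (integrable_exp_neg_sq.mul_const _) (ae_of_all _ fun v => by fun_prop)
  rw [norm_mul, norm_of_nonneg (exp_pos _).le]
  exact mul_le_mul_of_nonneg_left (φ.norm_coe_le_norm _) (exp_pos _).le

theorem heat1_eq_integral_exp_neg_sq {t : ℝ} (ht : 0 < t) (φ : ℝ → ℝ) (x : ℝ) :
    heat1 t φ x = (√π)⁻¹ * ∫ v, exp (-v ^ 2) * φ (x - 2 * √t * v) := by
  have hst : 0 < 2 * √t := by positivity
  have hkernel : ∀ w, (4 * π * t) ^ (-(1 : ℝ) / 2) * exp (-w ^ 2 / (4 * t))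
      = (√π)⁻¹ * (2 * √t)⁻¹ * exp (-(w / (2 * √t)) ^ 2) := by
    intro w
    have h4t : 4 * t = (2 * √t) ^ 2 := by rw [mul_pow, sq_sqrt ht.le]; norm_num
    rw [show (-(1 : ℝ) / 2) = -(1 / 2) by ring, rpow_neg (by positivity), ← sqrt_eq_rpow,
      div_pow, ← h4t, neg_div, mul_right_comm, sqrt_mul (by positivity), h4t, sqrt_sq hst.le]
    ring
  calc heat1 t φ x
      = ∫ w, (4 * π * t) ^ (-(1 : ℝ) / 2) * exp (-w ^ 2 / (4 * t)) * φ (x - w) := by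
        rw [heat1, ← integral_sub_left_eq_self _ volume x]
        simp only [sub_sub_cancel]
    _ = (√π)⁻¹ * ((2 * √t)⁻¹ * ∫ w, exp (-(w / (2 * √t)) ^ 2) * φ (x - w)) := by
        simp only [hkernel, ← integral_const_mul]
        congr 1 with w
        ring
    _ = (√π)⁻¹ * ∫ v, exp (-v ^ 2) * φ (x - 2 * √t * v) := by
        have := Measure.integral_comp_mul_left
          (fun w => exp (-(w / (2 * √t)) ^ 2) * φ (x - w)) (2 * √t)
        simp only [mul_div_cancel_left₀ _ hst.ne', abs_of_pos (inv_pos.2 hst), smul_eq_mul] at this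
        rw [this]

theorem continuous_heat1 {t : ℝ} (ht : 0 < t) (φ : ℝ →ᵇ ℝ) : Continuous (heat1 t φ) := by
  simp only [funext (heat1_eq_integral_exp_neg_sq ht φ)]
  exact continuous_const.mul <|
    (continuous_integral_exp_neg_sq_mul_comp φ).comp (continuous_id.prodMk continuous_const)

theorem tendsto_heat1_nhdsGT_zero (φ : ℝ →ᵇ ℝ) (x : ℝ) :
    Tendsto (fun t => heat1 t φ x) (𝓝[>] 0) (𝓝 (φ x)) := by
  have hlim : Tendsto (fun t : ℝ => (√π)⁻¹ * ∫ v, exp (-v ^ 2) * φ (x - 2 * √t * v))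
      (𝓝 0) (𝓝 ((√π)⁻¹ * ∫ v, exp (-v ^ 2) * φ (x - 2 * √0 * v))) :=
    (continuous_const.mul <| (continuous_integral_exp_neg_sq_mul_comp φ).comp
      (continuous_const.prodMk (by fun_prop))).tendsto 0
  have hval : (√π)⁻¹ * ∫ v, exp (-v ^ 2) * φ (x - 2 * √0 * v) = φ x := by
    simp only [sqrt_zero, mul_zero, zero_mul, sub_zero, integral_mul_const, integral_exp_neg_sq]
    field_simp
  rw [hval] at hlim
  exact (hlim.mono_left nhdsWithin_le_nhds).congr'
    (eventually_nhdsWithin_of_forall fun t ht => (heat1_eq_integral_exp_neg_sq ht φ x).symm)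

theorem heat1_comp_mul_left {t c : ℝ} (ht : 0 < t) (hc : 0 < c) (φ : ℝ → ℝ) (x : ℝ) :
    heat1 t (fun y => φ (c * y)) x = heat1 (c ^ 2 * t) φ (c * x) := by
  rw [heat1_eq_integral_exp_neg_sq ht, heat1_eq_integral_exp_neg_sq (by positivity),
    sqrt_mul (sq_nonneg c), sqrt_sq hc.le]
  congr 3 with v
  congr 2
  ring

theorem norm_heat1_le {t : ℝ} (ht : 0 < t) {φ : ℝ → ℝ} (hφ : Integrable φ) (x : ℝ) :
    ‖heat1 t φ x‖ ≤ (4 * π * t) ^ (-(1 : ℝ) / 2) * ∫ y, ‖φ y‖ := by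
  rw [heat1, ← integral_const_mul]
  refine norm_integral_le_of_norm_le (hφ.norm.const_mul _) (ae_of_all _ fun y => ?_)
  have hexp : exp (-(x - y) ^ 2 / (4 * t)) ≤ 1 :=
    exp_le_one_iff.2 (div_nonpos_of_nonpos_of_nonneg (by nlinarith) (by positivity))
  rw [norm_mul, norm_mul, norm_of_nonneg (by positivity), norm_of_nonneg (exp_pos _).le]
  gcongr
  exact mul_le_of_le_one_right (by positivity) hexp

theorem heat3_prod {t : ℝ} (ht : 0 ≤ t) (F : Fin 3 → ℝ → ℝ) (x : EuclideanSpace ℝ (Fin 3)) :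
    heat3 t (fun z => ∏ i, F i (z i)) x = ∏ i, heat1 t (F i) (x i) := by
  have hkernel : ∀ y : EuclideanSpace ℝ (Fin 3),
      (4 * π * t) ^ (-(3 : ℝ) / 2) * exp (-‖x - y‖ ^ 2 / (4 * t))
        = ∏ i, (4 * π * t) ^ (-(1 : ℝ) / 2) * exp (-(x i - y i) ^ 2 / (4 * t)) := by
    intro y
    rw [Finset.prod_mul_distrib, Finset.prod_const, Finset.card_fin, ← exp_sum,
      ← rpow_natCast _ 3, ← rpow_mul (by positivity), EuclideanSpace.real_norm_sq_eq,
      neg_div, ← Finset.sum_div, ← Finset.sum_neg_distrib]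
    norm_num
  simp only [heat3, heat1, hkernel, ← Finset.prod_mul_distrib]
  let k (i : Fin 3) (v : ℝ) : ℝ :=
    (4 * π * t) ^ (-(1 : ℝ) / 2) * exp (-(x i - v) ^ 2 / (4 * t)) * F i v
  exact ((EuclideanSpace.volume_preserving_symm_measurableEquiv_toLp (Fin 3)).integral_comp'
    (g := fun y => ∏ i, k i (y i))).trans (integral_fintype_prod_volume_eq_prod k)

theorem heat3_comp_mul {t a b c : ℝ} (ht : 0 < t) (ha : 0 < a) (hb : 0 < b) (hc : 0 < c)
    (f g h : ℝ → ℝ) (x : EuclideanSpace ℝ (Fin 3)) :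
    heat3 t (fun z => f (a * z 0) * g (b * z 1) * h (c * z 2)) x
      = heat1 (a ^ 2 * t) f (a * x 0) * heat1 (b ^ 2 * t) g (b * x 1)
        * heat1 (c ^ 2 * t) h (c * x 2) := by
  have htensor : (fun z : EuclideanSpace ℝ (Fin 3) => f (a * z 0) * g (b * z 1) * h (c * z 2))
      = fun z => ∏ i, ![fun y => f (a * y), fun y => g (b * y), fun y => h (c * y)] i (z i) := by
    ext z
    simp [Fin.prod_univ_three]
  rw [htensor, heat3_prod ht.le, Fin.prod_univ_three]
  simp [heat1_comp_mul_left ht, ha, hb, hc]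

noncomputable def caloricNorm1 (φ : ℝ → ℝ) : ℝ≥0∞ :=
  ⨆ (t : ℝ) (_ : 0 < t), ENNReal.ofReal (t ^ ((1 : ℝ) / 2)) * eLpNorm (heat1 t φ) ∞ volume

noncomputable def caloricNorm3 (φ : EuclideanSpace ℝ (Fin 3) → ℝ) : ℝ≥0∞ :=
  ⨆ (t : ℝ) (_ : 0 < t), ENNReal.ofReal (t ^ ((1 : ℝ) / 2)) * eLpNorm (heat3 t φ) ∞ volume

theorem caloricNorm1_le {φ : ℝ → ℝ} (hφ : Integrable φ) :
    caloricNorm1 φ ≤ ENNReal.ofReal ((4 * π) ^ (-(1 : ℝ) / 2) * ∫ y, ‖φ y‖) := by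
  refine iSup₂_le fun t ht => ?_
  have hscale : t ^ ((1 : ℝ) / 2) * (4 * π * t) ^ (-(1 : ℝ) / 2) = (4 * π) ^ (-(1 : ℝ) / 2) := by
    rw [mul_rpow (by positivity) ht.le, mul_left_comm, ← rpow_add ht]
    norm_num
  rw [← hscale, mul_assoc, ENNReal.ofReal_mul (by positivity)]
  gcongr
  exact eLpNormEssSup_le_of_ae_bound (ae_of_all _ (norm_heat1_le ht hφ))

theorem exists_lt_rpow_mul_enorm_heat1 (φ : ℝ →ᵇ ℝ) {c : ℝ≥0∞} (hc : c < caloricNorm1 φ) :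
    ∃ s > 0, ∃ y, c < ENNReal.ofReal (s ^ ((1 : ℝ) / 2)) * ‖heat1 s φ y‖ₑ := by
  simp only [caloricNorm1, lt_iSup_iff] at hc
  obtain ⟨s, hs, hc⟩ := hc
  rw [(continuous_heat1 hs φ).eLpNorm_top_eq_iSup, ENNReal.mul_iSup, lt_iSup_iff] at hc
  exact ⟨s, hs, hc⟩

theorem exists_eventually_lt_enorm_heat1 (φ : ℝ →ᵇ ℝ) {a : ℝ≥0∞}
    (ha : a < eLpNorm φ ∞ volume) : ∃ y, ∀ᶠ t in 𝓝[>] 0, a < ‖heat1 t φ y‖ₑ := by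
  rw [φ.continuous.eLpNorm_top_eq_iSup, lt_iSup_iff] at ha
  obtain ⟨y, hy⟩ := ha
  exact ⟨y, (tendsto_heat1_nhdsGT_zero φ y).enorm.eventually_const_lt hy⟩

theorem tendsto_rpow_mul_nhdsGT_zero {p s : ℝ} (hp : 0 < p) (hs : 0 < s) :
    Tendsto (fun ε : ℝ => ε ^ p * s) (𝓝[>] 0) (𝓝[>] 0) := by
  refine tendsto_nhdsWithin_iff.2 ⟨?_, eventually_nhdsWithin_of_forall fun ε hε =>
    mul_pos (rpow_pos_of_pos hε p) hs⟩
  have := ((continuousAt_rpow_const 0 p (.inr hp.le)).tendsto.mul_const s).mono_left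
    (nhdsWithin_le_nhds (s := Set.Ioi 0))
  rwa [zero_rpow hp.ne', zero_mul] at this

theorem rpow_sq_mul_rpow_mul {ε : ℝ} (hε : 0 < ε) (a b s : ℝ) :
    (ε ^ a) ^ 2 * (ε ^ (-2 * b) * s) = ε ^ (2 * (a - b)) * s := by
  rw [← rpow_natCast, ← rpow_mul hε.le, ← mul_assoc, ← rpow_add hε]
  ring_nf

theorem heat3_rescale {α β ε s : ℝ} (hε : 0 < ε) (hs : 0 < s) (f g h : ℝ → ℝ) :
    heat3 (ε ^ (-2 * α) * s) (fun z => f (ε ^ α * z 0) * g (ε ^ β * z 1) * h (ε * z 2))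
      = fun x => heat1 s f (ε ^ α * x 0) * heat1 (ε ^ (2 * (β - α)) * s) g (ε ^ β * x 1)
        * heat1 (ε ^ (2 * (1 - α)) * s) h (ε * x 2) := by
  ext x
  have hε₃ : ε ^ 2 * (ε ^ (-2 * α) * s) = ε ^ (2 * (1 - α)) * s := by
    simpa using rpow_sq_mul_rpow_mul hε 1 α s
  rw [heat3_comp_mul (by positivity) (by positivity) (by positivity) hε, rpow_sq_mul_rpow_mul hε,
    rpow_sq_mul_rpow_mul hε, hε₃, sub_self, mul_zero, rpow_zero, one_mul]

theorem le_caloricNorm3_rescale {α β ε s : ℝ} (hε : 0 < ε) (hs : 0 < s) (f g h : ℝ →ᵇ ℝ)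
    (y₁ y₂ y₃ : ℝ) :
    ENNReal.ofReal (ε ^ (-α)) * (ENNReal.ofReal (s ^ ((1 : ℝ) / 2)) * ‖heat1 s f y₁‖ₑ
        * ‖heat1 (ε ^ (2 * (β - α)) * s) g y₂‖ₑ * ‖heat1 (ε ^ (2 * (1 - α)) * s) h y₃‖ₑ) ≤
      caloricNorm3 (fun z => f (ε ^ α * z 0) * g (ε ^ β * z 1) * h (ε * z 2)) := by
  have hcont : Continuous fun x : EuclideanSpace ℝ (Fin 3) => heat1 s f (ε ^ α * x 0)
      * heat1 (ε ^ (2 * (β - α)) * s) g (ε ^ β * x 1) * heat1 (ε ^ (2 * (1 - α)) * s) h (ε * x 2) := by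
    have := continuous_heat1 hs f
    have := continuous_heat1 (by positivity : 0 < ε ^ (2 * (β - α)) * s) g
    have := continuous_heat1 (by positivity : 0 < ε ^ (2 * (1 - α)) * s) h
    fun_prop
  have htime : ENNReal.ofReal ((ε ^ (-2 * α) * s) ^ ((1 : ℝ) / 2))
      = ENNReal.ofReal (ε ^ (-α)) * ENNReal.ofReal (s ^ ((1 : ℝ) / 2)) := by
    rw [mul_rpow (by positivity) hs.le, ← rpow_mul hε.le, ENNReal.ofReal_mul (by positivity)]
    ring_nf
  let x : EuclideanSpace ℝ (Fin 3) := !₂[y₁ / ε ^ α, y₂ / ε ^ β, y₃ / ε]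
  refine le_iSup₂_of_le (ε ^ (-2 * α) * s) (by positivity) ?_
  rw [heat3_rescale hε hs, htime]
  calc _ = ENNReal.ofReal (ε ^ (-α)) * ENNReal.ofReal (s ^ ((1 : ℝ) / 2)) *
        ‖heat1 s f (ε ^ α * x 0) * heat1 (ε ^ (2 * (β - α)) * s) g (ε ^ β * x 1)
          * heat1 (ε ^ (2 * (1 - α)) * s) h (ε * x 2)‖ₑ := by
        simp only [x, Matrix.cons_val_zero, Matrix.cons_val_one, Matrix.cons_val,
          enorm_mul, mul_div_cancel₀ _ (rpow_pos_of_pos hε _).ne', mul_div_cancel₀ _ hε.ne']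
        ring
    _ ≤ _ := by
        gcongr
        exact hcont.enorm_le_eLpNorm_top x

theorem eventually_le_caloricNorm3 {α β : ℝ} (hαβ : α < β) (hβ1 : β < 1) (f g h : ℝ →ᵇ ℝ)
    {a : ℝ≥0∞} (ha : a < caloricNorm1 f * eLpNorm g ∞ volume * eLpNorm h ∞ volume) :
    ∀ᶠ ε in 𝓝[>] 0, ENNReal.ofReal (ε ^ (-α)) * a ≤
      caloricNorm3 (fun z => f (ε ^ α * z 0) * g (ε ^ β * z 1) * h (ε * z 2)) := by
  obtain ⟨a₁₂, ha₁₂, a₃, ha₃, ha⟩ := ENNReal.exists_lt_lt_of_lt_mul ha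
  obtain ⟨a₁, ha₁, a₂, ha₂, ha₁₂⟩ := ENNReal.exists_lt_lt_of_lt_mul ha₁₂
  obtain ⟨s, hs, y₁, hy₁⟩ := exists_lt_rpow_mul_enorm_heat1 f ha₁
  obtain ⟨y₂, hy₂⟩ := exists_eventually_lt_enorm_heat1 g ha₂
  obtain ⟨y₃, hy₃⟩ := exists_eventually_lt_enorm_heat1 h ha₃
  filter_upwards [(tendsto_rpow_mul_nhdsGT_zero (by linarith : 0 < 2 * (β - α)) hs).eventually hy₂,
    (tendsto_rpow_mul_nhdsGT_zero (by linarith : 0 < 2 * (1 - α)) hs).eventually hy₃,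
    self_mem_nhdsWithin] with ε hy₂ hy₃ (hε : 0 < ε)
  refine le_trans ?_ (le_caloricNorm3_rescale hε hs f g h y₁ y₂ y₃)
  gcongr
  exact ha.le.trans (mul_le_mul' (ha₁₂.le.trans (mul_le_mul' hy₁.le hy₂.le)) hy₃.le)

theorem caloric_besov_lower_bound_of_lt_general (α β : ℝ) (hαβ : α < β) (hβ1 : β < 1)
    (f g h : SchwartzMap ℝ ℝ) :
    ∃ ε₀ > 0, ∀ ε : ℝ, 0 < ε → ε < ε₀ →
      ENNReal.ofReal ((1 / 4 : ℝ) * ε ^ (-α)) *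
          (⨆ (t : ℝ) (_ : 0 < t),
            ENNReal.ofReal (t ^ ((1 : ℝ) / 2)) * eLpNorm (heat1 t (⇑f)) ⊤ volume) *
          eLpNorm (⇑g) ⊤ volume * eLpNorm (⇑h) ⊤ volume ≤
        ⨆ (t : ℝ) (_ : 0 < t),
          ENNReal.ofReal (t ^ ((1 : ℝ) / 2)) *
            eLpNorm
              (heat3 t (fun z => f (ε ^ α * z 0) * g (ε ^ β * z 1) * h (ε * z 2))) ⊤
              volume := by
  set N := caloricNorm1 f * eLpNorm g ∞ volume * eLpNorm h ∞ volume
  have hf : caloricNorm1 f ≠ ∞ :=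
    ne_top_of_le_ne_top ENNReal.ofReal_ne_top (caloricNorm1_le f.integrable)
  have hg : eLpNorm g ∞ volume ≠ ∞ := (g.memLp ∞ volume).eLpNorm_ne_top
  have hh : eLpNorm h ∞ volume ≠ ∞ := (h.memLp ∞ volume).eLpNorm_ne_top
  have hN : N ≠ ∞ := ENNReal.mul_ne_top (ENNReal.mul_ne_top hf hg) hh
  have hev : ∀ᶠ ε in 𝓝[>] 0, ENNReal.ofReal (ε ^ (-α)) * (4⁻¹ * N) ≤
      caloricNorm3 (fun z => f (ε ^ α * z 0) * g (ε ^ β * z 1) * h (ε * z 2)) := by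
    rcases eq_or_ne N 0 with hN₀ | hN₀
    · simp [hN₀]
    · refine eventually_le_caloricNorm3 hαβ hβ1 f.toBoundedContinuousFunction
        g.toBoundedContinuousFunction h.toBoundedContinuousFunction ?_
      have hquarter : 4⁻¹ * N < N := by
        simpa only [mul_comm N, one_mul] using
          ENNReal.mul_lt_mul_right hN₀ hN (by norm_num : (4⁻¹ : ℝ≥0∞) < 1)
      exact hquarter
  obtain ⟨ε₀, hε₀, hev⟩ := (nhdsGT_basis 0).eventually_iff.1 hev
  refine ⟨ε₀, hε₀, fun ε hε hεε₀ => le_of_eq_of_le ?_ (hev ⟨hε, hεε₀⟩)⟩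
  rw [ENNReal.ofReal_mul (by norm_num), one_div, ENNReal.ofReal_inv_of_pos (by norm_num),
    ENNReal.ofReal_ofNat]
  simp only [N, caloricNorm1]
  ring

/-- Lower bound for the caloric `Ḃ^{-1}_{∞,∞}` norm of anisotropically scaled data
(case `α < β`): for `ψ^ε(x) = f(ε^α x₁) g(ε^β x₂) h(ε x₃)` and `ε` small enough,
`sup_{t>0} t^{1/2} ‖H₃(t)ψ^ε‖_{L^∞} ≥ (1/4) ε^{−α} (sup_{t>0} t^{1/2} ‖H₁(t)f‖_{L^∞})
‖g‖_{L^∞} ‖h‖_{L^∞}`. -/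
theorem caloric_besov_lower_bound_of_lt (α β : ℝ) (hα0 : 0 ≤ α) (hαβ : α < β) (hβ1 : β < 1)
    (f g h : SchwartzMap ℝ ℝ) :
    ∃ ε₀ > 0, ∀ ε : ℝ, 0 < ε → ε < ε₀ →
      ENNReal.ofReal ((1 / 4 : ℝ) * ε ^ (-α)) *
          (⨆ (t : ℝ) (_ : 0 < t),
            ENNReal.ofReal (t ^ ((1 : ℝ) / 2)) * eLpNorm (heat1 t (⇑f)) ⊤ volume) *
          eLpNorm (⇑g) ⊤ volume * eLpNorm (⇑h) ⊤ volume ≤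
        ⨆ (t : ℝ) (_ : 0 < t),
          ENNReal.ofReal (t ^ ((1 : ℝ) / 2)) *
            eLpNorm
              (heat3 t (fun z => f (ε ^ α * z 0) * g (ε ^ β * z 1) * h (ε * z 2))) ⊤
              volume :=
  caloric_besov_lower_bound_of_lt_general α β hαβ hβ1 f g h
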